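/- Let η ∈ (0, 0.5), ε > 0, and consider a rooted tree 𝒯 of adaptive experiments where each node v is assigned an evolution time t⁽ᵛ⁾ ≥ 0 and a pair of outcome distributions p₊⁽ᵛ⁾, p₋⁽ᵛ⁾ over its children satisfying TV(p₊⁽ᵛ⁾, p₋⁽ᵛ⁾) ≤ (1-η)·min(2ε t⁽ᵛ⁾, 1). Let p₊^𝒯, p₋^𝒯 be the induced distributions over leaves (multiplying transition probabilities along root-to-leaf paths), and let t(𝒯) be the maximum over root-to-leaf paths of the sum of node evolution times. Then TV(p₊^𝒯, p₋^𝒯) ≤ 1 - η^{2ε·t(𝒯)}. -/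

import Mathlib

/-- A rooted tree of adaptive experiments: each internal node carries an evolution time
`t`, a pair of outcome distributions `pP, pM` over its `n+1` children, and the subtrees. -/
inductive ExpTree : Type
  | leaf : ExpTree
  | node (t : ℝ) (n : ℕ) (pP pM : Fin (n + 1) → ℝ)
      (child : Fin (n + 1) → ExpTree) : ExpTree

namespace ExpTree

/-- The maximum over root-to-leaf paths of the sum of node evolution times. -/
noncomputable def maxTime : ExpTree → ℝ
  | leaf => 0
  | node t _ _ _ child => t + Finset.univ.sup' Finset.univ_nonempty
      fun i => maxTime (child i)

/-- Induced distribution over leaves (encoded as root-to-leaf paths, i.e. lists of child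
indices), under the `+` hypothesis: product of the `pP` transition probabilities. -/
noncomputable def probP : ExpTree → List ℕ → ℝ
  | leaf, [] => 1
  | leaf, _ :: _ => 0
  | node _ _ _ _ _, [] => 0
  | node _ n pP _ child, i :: rest =>
      if h : i < n + 1 then pP ⟨i, h⟩ * probP (child ⟨i, h⟩) rest else 0

/-- Induced distribution over leaves under the `-` hypothesis. -/
noncomputable def probM : ExpTree → List ℕ → ℝ
  | leaf, [] => 1
  | leaf, _ :: _ => 0
  | node _ _ _ _ _, [] => 0
  | node _ n _ pM child, i :: rest =>
      if h : i < n + 1 then pM ⟨i, h⟩ * probM (child ⟨i, h⟩) rest else 0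

/-- Validity of a tree of experiments: at every node, the evolution time is nonnegative,
`pP, pM` are probability distributions over the children, and their total variation
distance is at most `(1-η)·min(2εt, 1)`. -/
def valid (η ε : ℝ) : ExpTree → Prop
  | leaf => True
  | node t _ pP pM child =>
      0 ≤ t ∧ (∀ i, 0 ≤ pP i) ∧ (∀ i, 0 ≤ pM i) ∧
      (∑ i, pP i) = 1 ∧ (∑ i, pM i) = 1 ∧
      (1 / 2) * (∑ i, |pP i - pM i|) ≤ (1 - η) * min (2 * ε * t) 1 ∧
      ∀ i, valid η ε (child i)

end ExpTree

/-!
The overlap `1 - TV = ∑ᵢ min (p₊ⁱ, p₋ⁱ)` is supermultiplicative down the tree: the mass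
`min (p₊ⁱ, p₋ⁱ)` that both hypotheses send to child `i` keeps at least the overlap of the
subtree below it. By Bernoulli's inequality `η ^ x ≤ 1 - (1 - η) x` on `[0, 1]`, a node of
evolution time `t` has overlap at least `η ^ (2 ε t)`, and these exponents add up along
root-to-leaf paths.
-/

open scoped ENNReal
open ENNReal (ofReal)

theorem rpow_le_one_sub_mul {η x : ℝ} (hη : 0 ≤ η) (hx0 : 0 ≤ x) (hx1 : x ≤ 1) :
    η ^ x ≤ 1 - (1 - η) * x := by
  have := rpow_one_add_le_one_add_mul_self (s := η - 1) (by linarith) hx0 hx1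
  rw [add_sub_cancel] at this
  linarith

theorem sum_min_eq_one_sub_half_sum_abs_sub {ι : Type*} [Fintype ι] {p q : ι → ℝ}
    (hp : ∑ i, p i = 1) (hq : ∑ i, q i = 1) :
    ∑ i, min (p i) (q i) = 1 - (1 / 2) * ∑ i, |p i - q i| := by
  have h : ∑ i, 2 * min (p i) (q i) = ∑ i, (p i + q i - |p i - q i|) :=
    Finset.sum_congr rfl fun i _ => by
      linarith [min_add_max (p i) (q i), max_sub_min_eq_abs' (p i) (q i)]
  rw [← Finset.mul_sum, Finset.sum_sub_distrib, Finset.sum_add_distrib, hp, hq] at h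
  linarith

theorem abs_mul_sub_mul_le {a b x y : ℝ} (ha : 0 ≤ a) (hb : 0 ≤ b) (hx : 0 ≤ x)
    (hy : 0 ≤ y) :
    |a * x - b * y| ≤ min a b * |x - y| + (a - min a b) * x + (b - min a b) * y := by
  have hm : 0 ≤ min a b := le_min ha hb
  calc |a * x - b * y| = |min a b * (x - y) + ((a - min a b) * x - (b - min a b) * y)| := by
        ring_nf
    _ ≤ |min a b * (x - y)| + |(a - min a b) * x - (b - min a b) * y| := abs_add_le _ _
    _ ≤ min a b * |x - y| + (a - min a b) * x + (b - min a b) * y := by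
        rw [abs_mul, abs_of_nonneg hm, add_assoc]
        gcongr
        refine (abs_sub _ _).trans_eq ?_
        rw [abs_of_nonneg (mul_nonneg (sub_nonneg.2 (min_le_left a b)) hx),
          abs_of_nonneg (mul_nonneg (sub_nonneg.2 (min_le_right a b)) hy)]

theorem tsum_ofReal_abs_mul_sub_mul_le {α : Type*} {a b : ℝ} (ha : 0 ≤ a) (hb : 0 ≤ b)
    {x y : α → ℝ} (hx : ∀ r, 0 ≤ x r) (hy : ∀ r, 0 ≤ y r)
    (hx1 : ∑' r, ofReal (x r) = 1) (hy1 : ∑' r, ofReal (y r) = 1) :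
    ∑' r, ofReal |a * x r - b * y r|
      ≤ ofReal (min a b) * ∑' r, ofReal |x r - y r| + ofReal (a - min a b)
        + ofReal (b - min a b) := by
  have hm : 0 ≤ min a b := le_min ha hb
  have ham : 0 ≤ a - min a b := sub_nonneg.2 (min_le_left a b)
  have hbm : 0 ≤ b - min a b := sub_nonneg.2 (min_le_right a b)
  calc ∑' r, ofReal |a * x r - b * y r|
      ≤ ∑' r, (ofReal (min a b) * ofReal |x r - y r| + ofReal (a - min a b) * ofReal (x r)
          + ofReal (b - min a b) * ofReal (y r)) := by
        refine ENNReal.tsum_le_tsum fun r => ?_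
        have h₁ := mul_nonneg hm (abs_nonneg (x r - y r))
        have h₂ := mul_nonneg ham (hx r)
        rw [← ENNReal.ofReal_mul hm, ← ENNReal.ofReal_mul ham, ← ENNReal.ofReal_mul hbm,
          ← ENNReal.ofReal_add h₁ h₂,
          ← ENNReal.ofReal_add (add_nonneg h₁ h₂) (mul_nonneg hbm (hy r))]
        exact ENNReal.ofReal_le_ofReal (abs_mul_sub_mul_le ha hb (hx r) (hy r))
    _ = _ := by
        rw [ENNReal.tsum_add, ENNReal.tsum_add, ENNReal.tsum_mul_left, ENNReal.tsum_mul_left,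
          ENNReal.tsum_mul_left, hx1, hy1, mul_one, mul_one]

theorem tsum_list_eq_sum_tsum_cons {n : ℕ} {f : List ℕ → ℝ≥0∞} (h_nil : f [] = 0)
    (h_cons : ∀ i r, n + 1 ≤ i → f (i :: r) = 0) :
    ∑' ℓ, f ℓ = ∑ i : Fin (n + 1), ∑' r, f (i :: r) := by
  have hinj : Function.Injective fun p : ℕ × List ℕ => p.1 :: p.2 :=
    fun p q h => Prod.ext (List.cons.inj h).1 (List.cons.inj h).2
  have hsupp : f.support ⊆ Set.range fun p : ℕ × List ℕ => p.1 :: p.2 := by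
    rintro (_ | ⟨i, r⟩) h
    · exact absurd h_nil h
    · exact ⟨(i, r), rfl⟩
  rw [← hinj.tsum_eq hsupp, ENNReal.tsum_prod (f := fun i r => f (i :: r)),
    Fin.sum_univ_eq_sum_range (fun i => ∑' r, f (i :: r))]
  refine tsum_eq_sum fun i hi => ENNReal.tsum_eq_zero.2 fun r => h_cons i r ?_
  simpa using hi

namespace ExpTree

variable {η ε t : ℝ} {n : ℕ} {pP pM : Fin (n + 1) → ℝ} {child : Fin (n + 1) → ExpTree}

theorem valid_child (h : (node t n pP pM child).valid η ε) (i : Fin (n + 1)) :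
    (child i).valid η ε :=
  h.2.2.2.2.2.2 i

def swap : ExpTree → ExpTree
  | leaf => leaf
  | node t n pP pM child => node t n pM pP fun i => (child i).swap

theorem probM_eq_probP_swap : ∀ (T : ExpTree) (ℓ : List ℕ), T.probM ℓ = T.swap.probP ℓ
  | leaf, [] | leaf, _ :: _ | node .., [] => rfl
  | node t n pP pM child, i :: r => by
      simp only [probM, swap, probP, probM_eq_probP_swap]

theorem valid_swap : ∀ {T : ExpTree}, T.valid η ε → T.swap.valid η ε
  | leaf, _ => trivial
  | node t n pP pM child, ⟨ht, hP, hM, hsP, hsM, hTV, hchild⟩ => by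
      refine ⟨ht, hM, hP, hsM, hsP, ?_, fun i => valid_swap (hchild i)⟩
      simpa only [abs_sub_comm] using hTV

theorem maxTime_nonneg : ∀ {T : ExpTree}, T.valid η ε → 0 ≤ T.maxTime
  | leaf, _ => le_rfl
  | node t n pP pM child, h => by
      have := Finset.le_sup' (fun i => (child i).maxTime) (Finset.mem_univ 0)
      simp only [maxTime]
      linarith [h.1, maxTime_nonneg (valid_child h 0)]

theorem probP_node_cons (i : Fin (n + 1)) (r : List ℕ) :
    (node t n pP pM child).probP (i :: r) = pP i * (child i).probP r := by
  simp only [probP, dif_pos i.isLt, Fin.eta]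

theorem probM_node_cons (i : Fin (n + 1)) (r : List ℕ) :
    (node t n pP pM child).probM (i :: r) = pM i * (child i).probM r := by
  simp only [probM, dif_pos i.isLt, Fin.eta]

theorem probP_nonneg : ∀ {T : ExpTree}, T.valid η ε → ∀ ℓ, 0 ≤ T.probP ℓ
  | leaf, _, [] => zero_le_one
  | leaf, _, _ :: _ | node .., _, [] => le_rfl
  | node t n pP pM child, h, i :: r => by
      simp only [probP]
      split
      · exact mul_nonneg (h.2.1 _) (probP_nonneg (valid_child h _) r)
      · exact le_rfl

theorem tsum_ofReal_probP : ∀ {T : ExpTree}, T.valid η ε → ∑' ℓ, ofReal (T.probP ℓ) = 1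
  | leaf, _ => by
      rw [tsum_eq_single []]
      · simp [probP]
      · rintro (_ | _) h
        exacts [absurd rfl h, by simp [probP]]
  | node t n pP pM child, ⟨_, hP, _, hsP, _, _, hchild⟩ => by
      rw [tsum_list_eq_sum_tsum_cons (n := n) (by simp [probP])
        fun i r hi => by simp [probP, not_lt.2 hi]]
      simp_rw [probP_node_cons, ENNReal.ofReal_mul (hP _), ENNReal.tsum_mul_left,
        tsum_ofReal_probP (hchild _), mul_one]
      rw [← ENNReal.ofReal_sum_of_nonneg fun i _ => hP i, hsP, ENNReal.ofReal_one]

theorem probM_nonneg {T : ExpTree} (h : T.valid η ε) (ℓ : List ℕ) : 0 ≤ T.probM ℓ := by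
  rw [probM_eq_probP_swap]
  exact probP_nonneg (valid_swap h) ℓ

theorem tsum_ofReal_probM {T : ExpTree} (h : T.valid η ε) :
    ∑' ℓ, ofReal (T.probM ℓ) = 1 := by
  simpa only [probM_eq_probP_swap] using tsum_ofReal_probP (valid_swap h)

theorem rpow_le_sum_min_of_valid_node (hη0 : 0 < η) (hη1 : η ≤ 1) (hε : 0 ≤ ε)
    (h : (node t n pP pM child).valid η ε) :
    η ^ (2 * ε * t) ≤ ∑ i, min (pP i) (pM i) := by
  obtain ⟨ht, -, -, hsP, hsM, hTV, -⟩ := h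
  rw [sum_min_eq_one_sub_half_sum_abs_sub hsP hsM]
  have hmin : η ^ (2 * ε * t) ≤ η ^ min (2 * ε * t) 1 :=
    Real.rpow_le_rpow_of_exponent_ge hη0 hη1 (min_le_left _ _)
  have := rpow_le_one_sub_mul (x := min (2 * ε * t) 1) hη0.le
    (le_min (by positivity) zero_le_one) (min_le_right _ _)
  linarith

theorem tsum_ofReal_abs_probP_sub_probM_node_le (h : (node t n pP pM child).valid η ε)
    {c : ℝ} (hc : 0 ≤ c)
    (hchild : ∀ i, ∑' r, ofReal |(child i).probP r - (child i).probM r| ≤ ofReal c) :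
    ∑' ℓ, ofReal |(node t n pP pM child).probP ℓ - (node t n pP pM child).probM ℓ|
      ≤ ofReal ((∑ i, min (pP i) (pM i)) * c + 2 * (1 - ∑ i, min (pP i) (pM i))) := by
  obtain ⟨-, hP, hM, hsP, hsM, -, hvalid⟩ := h
  have hm i : 0 ≤ min (pP i) (pM i) := le_min (hP i) (hM i)
  have hmc i : 0 ≤ min (pP i) (pM i) * c := mul_nonneg (hm i) hc
  have hPm i : 0 ≤ pP i - min (pP i) (pM i) := sub_nonneg.2 (min_le_left _ _)
  have hMm i : 0 ≤ pM i - min (pP i) (pM i) := sub_nonneg.2 (min_le_right _ _)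
  rw [tsum_list_eq_sum_tsum_cons (n := n) (by simp [probP, probM])
    fun i r hi => by simp [probP, probM, not_lt.2 hi]]
  simp_rw [probP_node_cons, probM_node_cons]
  calc ∑ i, ∑' r, ofReal |pP i * (child i).probP r - pM i * (child i).probM r|
      ≤ ∑ i, (ofReal (min (pP i) (pM i)) * ofReal c + ofReal (pP i - min (pP i) (pM i))
          + ofReal (pM i - min (pP i) (pM i))) := by
        gcongr with i
        refine (tsum_ofReal_abs_mul_sub_mul_le (hP i) (hM i) (probP_nonneg (hvalid i))
          (probM_nonneg (hvalid i)) (tsum_ofReal_probP (hvalid i))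
          (tsum_ofReal_probM (hvalid i))).trans ?_
        gcongr
        exact hchild i
    _ = ofReal (∑ i, (min (pP i) (pM i) * c + (pP i - min (pP i) (pM i))
          + (pM i - min (pP i) (pM i)))) := by
        rw [ENNReal.ofReal_sum_of_nonneg fun i _ =>
          add_nonneg (add_nonneg (hmc i) (hPm i)) (hMm i)]
        refine Finset.sum_congr rfl fun i _ => ?_
        rw [ENNReal.ofReal_add (add_nonneg (hmc i) (hPm i)) (hMm i),
          ENNReal.ofReal_add (hmc i) (hPm i), ENNReal.ofReal_mul (hm i)]
    _ = _ := by
        simp only [Finset.sum_add_distrib, Finset.sum_sub_distrib, ← Finset.sum_mul, hsP, hsM]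
        ring_nf

theorem tsum_ofReal_abs_probP_sub_probM_le (hη0 : 0 < η) (hη1 : η ≤ 1) (hε : 0 ≤ ε) :
    ∀ {T : ExpTree}, T.valid η ε →
      ∑' ℓ, ofReal |T.probP ℓ - T.probM ℓ| ≤ ofReal (2 * (1 - η ^ (2 * ε * T.maxTime)))
  | leaf, _ => by
      have h_eq : ∀ ℓ, leaf.probP ℓ = leaf.probM ℓ := by rintro (_ | _) <;> rfl
      simp [h_eq]
  | node t n pP pM child, h => by
      set S := Finset.univ.sup' Finset.univ_nonempty fun i => (child i).maxTime
      have hS_ge i : (child i).maxTime ≤ S :=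
        Finset.le_sup' (fun i => (child i).maxTime) (Finset.mem_univ i)
      have hS : 0 ≤ S := (maxTime_nonneg (valid_child h 0)).trans (hS_ge 0)
      have hchild i : ∑' r, ofReal |(child i).probP r - (child i).probM r|
          ≤ ofReal (2 * (1 - η ^ (2 * ε * S))) := by
        refine (tsum_ofReal_abs_probP_sub_probM_le hη0 hη1 hε (valid_child h i)).trans
          (ENNReal.ofReal_le_ofReal ?_)
        have hle : 2 * ε * (child i).maxTime ≤ 2 * ε * S :=
          mul_le_mul_of_nonneg_left (hS_ge i) (by linarith)
        linarith [Real.rpow_le_rpow_of_exponent_ge hη0 hη1 hle]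
      have hQ : η ^ (2 * ε * S) ≤ 1 :=
        Real.rpow_le_one hη0.le hη1 (mul_nonneg (mul_nonneg zero_le_two hε) hS)
      have hO := rpow_le_sum_min_of_valid_node hη0 hη1 hε h
      refine (tsum_ofReal_abs_probP_sub_probM_node_le h (by linarith) hchild).trans
        (ENNReal.ofReal_le_ofReal ?_)
      rw [maxTime, mul_add, Real.rpow_add hη0]
      nlinarith [mul_le_mul_of_nonneg_right hO (Real.rpow_nonneg hη0.le (2 * ε * S))]

end ExpTree

/-- For any valid tree of adaptive experiments with measurement noise `η ∈ (0, 0.5)`,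
the total variation distance between the induced leaf distributions is at most
`1 - η^{2ε·t(𝒯)}`. -/
theorem tv_leaf_bound (η ε : ℝ) (hη0 : 0 < η) (hη1 : η < 0.5) (hε : 0 < ε)
    (T : ExpTree) (hT : T.valid η ε) :
    (1 / 2) * (∑' ℓ : List ℕ, |T.probP ℓ - T.probM ℓ|)
      ≤ 1 - η ^ (2 * ε * T.maxTime) := by
  have hη_le_one : η ≤ 1 := by linarith [show (0.5 : ℝ) ≤ 1 by norm_num]
  have hrpow : η ^ (2 * ε * T.maxTime) ≤ 1 :=
    Real.rpow_le_one hη0.le hη_le_one (by have := ExpTree.maxTime_nonneg hT; positivity)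
  have hbound := ENNReal.toReal_le_of_le_ofReal (by linarith)
    (ExpTree.tsum_ofReal_abs_probP_sub_probM_le hη0 hη_le_one hε.le hT)
  -- `tsum_toReal_eq` needs no summability: both sides are `0` when the series diverges.
  rw [ENNReal.tsum_toReal_eq fun _ => ENNReal.ofReal_ne_top] at hbound
  simp only [ENNReal.toReal_ofReal (abs_nonneg _)] at hbound
  linarith
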